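/- arXiv:2106.04254 — 2 statements merged into one kernel-verified Lean document; each statement's English description precedes it below -/
import Mathlib

section
/- Let f : ℝ → ℝ≥0 be an (L, a₁, a₂)-nice hinge function with a₂ > 0, and let v ∈ ℝⁿ. Then ∑ᵢ f(vᵢ) ≥ min(a₂/(2a₁), 1/2) · ‖v⁺‖₁, where v⁺ is the positive part of v. -/
/-! For `z ≥ 0` the bound is pointwise: when `z ≤ 2a₁` the floor `f z ≥ a₂` gives
`f z ≥ (a₂ / 2a₁) z`, and when `z > 2a₁` closeness to the ReLU gives `f z ≥ z - a₁ ≥ z / 2`.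
Summing over the nonnegative coordinates and adding the nonnegative rest gives the theorem. -/

theorem mul_le_of_abs_sub_max_le {f : ℝ → ℝ} {a₁ a₂ : ℝ} (ha₁ : 0 < a₁) (ha₂ : 0 < a₂)
    (hrelu : ∀ z : ℝ, |f z - max 0 z| ≤ a₁) (hpos : ∀ z : ℝ, 0 ≤ z → a₂ ≤ f z)
    {z : ℝ} (hz : 0 ≤ z) :
    min (a₂ / (2 * a₁)) (1 / 2) * z ≤ f z := by
  rcases le_or_gt z (2 * a₁) with hsmall | hlarge
  · calc min (a₂ / (2 * a₁)) (1 / 2) * z ≤ a₂ / (2 * a₁) * z := by gcongr; exact min_le_left _ _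
      _ ≤ a₂ / (2 * a₁) * (2 * a₁) := by gcongr
      _ = a₂ := by field_simp
      _ ≤ f z := hpos z hz
  · have hfar : z - a₁ ≤ f z := by
      have := (abs_le.mp (hrelu z)).1
      rw [max_eq_right hz] at this
      linarith
    calc min (a₂ / (2 * a₁)) (1 / 2) * z ≤ 1 / 2 * z := by gcongr; exact min_le_right _ _
      _ ≤ z - a₁ := by linarith
      _ ≤ f z := hfar

theorem Finset.mul_sum_filter_nonneg_le_sum {ι : Type*} (s : Finset ι) (v : ι → ℝ)
    {g : ℝ → ℝ} {c : ℝ} (hg : ∀ z, 0 ≤ g z) (hcg : ∀ z, 0 ≤ z → c * z ≤ g z) :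
    c * ∑ i ∈ s.filter (fun i => 0 ≤ v i), v i ≤ ∑ i ∈ s, g (v i) := by
  rw [Finset.mul_sum]
  calc ∑ i ∈ s.filter (fun i => 0 ≤ v i), c * v i
      ≤ ∑ i ∈ s.filter (fun i => 0 ≤ v i), g (v i) :=
        Finset.sum_le_sum fun i hi => hcg _ (Finset.mem_filter.mp hi).2
    _ ≤ ∑ i ∈ s, g (v i) :=
        Finset.sum_le_sum_of_subset_of_nonneg (Finset.filter_subset _ _) fun i _ _ => hg _

theorem nice_hinge_sum_lower_bound_general (n : ℕ) (f : ℝ → ℝ) (a₁ a₂ : ℝ)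
    (ha₁ : 0 < a₁) (ha₂ : 0 < a₂)
    (hf0 : ∀ z, 0 ≤ f z)
    (hrelu : ∀ z : ℝ, |f z - max 0 z| ≤ a₁)
    (hpos : ∀ z : ℝ, 0 ≤ z → a₂ ≤ f z)
    (v : Fin n → ℝ) :
    min (a₂ / (2 * a₁)) (1 / 2) * ∑ i ∈ Finset.univ.filter (fun i => 0 ≤ v i), v i
      ≤ ∑ i, f (v i) :=
  Finset.univ.mul_sum_filter_nonneg_le_sum v hf0 fun _ hz =>
    mul_le_of_abs_sub_max_le ha₁ ha₂ hrelu hpos hz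

theorem nice_hinge_sum_lower_bound (n : ℕ) (f : ℝ → ℝ) (L a₁ a₂ : ℝ)
    (ha₁ : 0 < a₁) (ha₂ : 0 < a₂)
    (hf0 : ∀ z, 0 ≤ f z)
    (hLip : ∀ x y : ℝ, |f x - f y| ≤ L * |x - y|)
    (hrelu : ∀ z : ℝ, |f z - max 0 z| ≤ a₁)
    (hpos : ∀ z : ℝ, 0 ≤ z → a₂ ≤ f z)
    (v : Fin n → ℝ) :
    min (a₂ / (2 * a₁)) (1 / 2) * ∑ i ∈ Finset.univ.filter (fun i => 0 ≤ v i), v i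
      ≤ ∑ i, f (v i) :=
  nice_hinge_sum_lower_bound_general n f a₁ a₂ ha₁ ha₂ hf0 hrelu hpos v
end

section
/- Let f : ℝ → ℝ≥0 satisfy f(z) ≥ a₂ for z ≥ 0 and f(z) ≥ max(0,z) − a₁ for all z, with 0 < a₂ and 0 < a₁. Then for any v ∈ ℝⁿ, ∑_{i: 0 ≤ vᵢ ≤ 2a₁} f(vᵢ) + ∑_{i: vᵢ > 2a₁} f(vᵢ) ≥ min(a₂/(2a₁), 1/2) · ∑_{i: vᵢ ≥ 0} vᵢ. -/
/-! Split the nonnegative entries at `2 * a₁`. An entry `z ∈ [0, 2 * a₁]` contributes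
`f z ≥ a₂ ≥ (a₂ / (2 * a₁)) * z`, and an entry `z > 2 * a₁` contributes
`f z ≥ z - a₁ ≥ z / 2`; in both cases `f z` dominates `min (a₂ / (2 * a₁)) (1 / 2) * z`. -/

open Finset

theorem Finset.sum_filter_nonneg_eq_add {ι M : Type*} [AddCommMonoid M] (s : Finset ι)
    (v : ι → ℝ) (g : ι → M) {t : ℝ} (ht : 0 ≤ t) :
    ∑ i ∈ s.filter (fun i => 0 ≤ v i), g i
      = ∑ i ∈ s.filter (fun i => 0 ≤ v i ∧ v i ≤ t), g i
        + ∑ i ∈ s.filter (fun i => t < v i), g i := by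
  rw [← sum_filter_add_sum_filter_not _ (fun i => v i ≤ t), filter_filter, filter_filter]
  congr 1
  refine sum_congr (filter_congr fun i _ => ?_) fun _ _ => rfl
  constructor
  · exact fun h => lt_of_not_ge h.2
  · exact fun h => ⟨ht.trans h.le, not_le.2 h⟩

theorem mul_le_of_le_div_of_le {b t c z : ℝ} (hb : 0 ≤ b) (hc : c ≤ b / t)
    (hz₀ : 0 ≤ z) (hzt : z ≤ t) : c * z ≤ b := by
  rcases (hz₀.trans hzt).eq_or_lt with rfl | ht
  · simpa [le_antisymm hzt hz₀] using hb
  calc c * z ≤ b / t * z := by gcongr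
    _ ≤ b := by rw [div_mul_eq_mul_div, div_le_iff₀ ht]; gcongr

theorem mul_le_of_max_zero_sub_le {f : ℝ → ℝ} {a c z : ℝ} (hf : ∀ z, max 0 z - a ≤ f z)
    (hc : c ≤ 1 / 2) (ha : 0 ≤ a) (hz : 2 * a < z) : c * z ≤ f z := by
  have hz₀ : 0 ≤ z := by linarith
  calc c * z ≤ 1 / 2 * z := by gcongr
    _ ≤ max 0 z - a := by rw [max_eq_right hz₀]; linarith
    _ ≤ f z := hf z

theorem hinge_split_lower_bound_general (n : ℕ) (f : ℝ → ℝ) (a₁ a₂ : ℝ)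
    (ha₁ : 0 < a₁) (ha₂ : 0 < a₂)
    (hpos : ∀ z : ℝ, 0 ≤ z → a₂ ≤ f z)
    (hrelu : ∀ z : ℝ, max 0 z - a₁ ≤ f z)
    (v : Fin n → ℝ) :
    min (a₂ / (2 * a₁)) (1 / 2) * ∑ i ∈ Finset.univ.filter (fun i => 0 ≤ v i), v i
      ≤ (∑ i ∈ Finset.univ.filter (fun i => 0 ≤ v i ∧ v i ≤ 2 * a₁), f (v i)) +
        ∑ i ∈ Finset.univ.filter (fun i => 2 * a₁ < v i), f (v i) := by
  rw [sum_filter_nonneg_eq_add _ v v (by positivity : (0 : ℝ) ≤ 2 * a₁), mul_add,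
    mul_sum, mul_sum]
  refine add_le_add (sum_le_sum fun i hi => ?_) (sum_le_sum fun i hi => ?_)
  · obtain ⟨hv₀, hv⟩ := (mem_filter.1 hi).2
    exact (mul_le_of_le_div_of_le ha₂.le (min_le_left _ _) hv₀ hv).trans (hpos _ hv₀)
  · exact mul_le_of_max_zero_sub_le hrelu (min_le_right _ _) ha₁.le (mem_filter.1 hi).2

theorem hinge_split_lower_bound (n : ℕ) (f : ℝ → ℝ) (a₁ a₂ : ℝ)
    (ha₁ : 0 < a₁) (ha₂ : 0 < a₂)
    (hf0 : ∀ z, 0 ≤ f z)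
    (hpos : ∀ z : ℝ, 0 ≤ z → a₂ ≤ f z)
    (hrelu : ∀ z : ℝ, max 0 z - a₁ ≤ f z)
    (v : Fin n → ℝ) :
    min (a₂ / (2 * a₁)) (1 / 2) * ∑ i ∈ Finset.univ.filter (fun i => 0 ≤ v i), v i
      ≤ (∑ i ∈ Finset.univ.filter (fun i => 0 ≤ v i ∧ v i ≤ 2 * a₁), f (v i)) +
        ∑ i ∈ Finset.univ.filter (fun i => 2 * a₁ < v i), f (v i) :=
  hinge_split_lower_bound_general n f a₁ a₂ ha₁ ha₂ hpos hrelu v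
end
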